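/- Let 𝔥 be a complex vector space with a symmetric bilinear form κ, let M be a complex vector space, and suppose operators x_{(n)} ∈ End_ℂ(M) (x ∈ 𝔥, n ∈ ℤ) satisfy the Heisenberg commutation relations. Then for all x, h ∈ 𝔥 and all integers m and r ≤ 0: if m ≤ 0 then x_{(m)} ∘ E_r(h) = E_r(h) ∘ x_{(m)}; and if m ≥ 1 then x_{(m)} ∘ E_r(h) − E_r(h) ∘ x_{(m)} = κ(x,h)·E_{r+m}(h), where E_s(h) := 0 for s ≥ 1. Equivalently, [x_{(m)}, E⁻(h,z)] = 0 for m ≤ 0 and [x_{(m)}, E⁻(h,z)] = κ(x,h)·z^m·E⁻(h,z) for m ≥ 1. -/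

import Mathlib

/-!
Statement 7: Heisenberg commutation of the operators `E_r(h)` (the coefficients
of `E⁻(h,z) = exp(Σ_{n<0} h_{(n)}/(−n) z^{−n})`) with the modes `x_{(m)}`:
for `r ≤ 0`, if `m ≤ 0` then `x_{(m)}` commutes with `E_r(h)`, and if `m ≥ 1`
then `[x_{(m)}, E_r(h)] = κ(x,h) · E_{r+m}(h)` (with `E_s(h) = 0` for `s ≥ 1`).
-/

open scoped BigOperators

variable {H M : Type*} [AddCommGroup H] [Module ℂ H] [AddCommGroup M] [Module ℂ M]

/-- The finset of `k`-tuples of negative integers summing to `r`. -/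
noncomputable def negTuples (k : ℕ) (r : ℤ) : Finset (Fin k → ℤ) :=
  (Fintype.piFinset fun _ => Finset.Icc r (-1)).filter fun f => ∑ j, f j = r

/-- The coefficient `E_r(h)` of `z^{−r}` in
`E⁻(h,z) = exp(Σ_{n<0} h_{(n)}/(−n) z^{−n})`, namely
`Σ_k (1/k!) Σ_{i₁+⋯+i_k = r, i_j < 0} Π_j (−i_j)⁻¹ · h_{(i₁)} ∘ ⋯ ∘ h_{(i_k)}`;
it is `id` for `r = 0` and `0` for `r ≥ 1`. -/
noncomputable def Ecoef (act : H → ℤ → Module.End ℂ M) (h : H) (r : ℤ) :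
    Module.End ℂ M :=
  if 1 ≤ r then 0
  else
    ∑ k ∈ Finset.range ((-r).toNat + 1),
      (k.factorial : ℂ)⁻¹ •
        ∑ f ∈ negTuples k r,
          (∏ j, (-(f j : ℂ))⁻¹) • (List.ofFn fun j => act h (f j)).prod

/-!
For `i < 0` the commutator `[x_{(m)}, h_{(i)}]` is the scalar `m κ(x,h)` if `i = -m` and `0`
otherwise, so for `m ≤ 0` the mode `x_{(m)}` commutes with every monomial of `E_r(h)`. For
`m ≥ 1` the Leibniz rule deletes one factor `h_{(-m)}` from each monomial, and the factor `m`
cancels the weight `1/m` of the deleted factor. Each of the `k + 1` positions of the deleted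
factor contributes the same sum over `k`-tuples, so the degree `k + 1` part of `E_r(h)` goes to
`(k + 1) κ(x,h)` times the degree `k` part of `E_{r+m}(h)`, and `(k + 1) / (k + 1)! = 1 / k!`.
-/

open Finset

section NegTuples

variable {k : ℕ} {s m : ℤ}

lemma mem_negTuples_iff {f : Fin k → ℤ} :
    f ∈ negTuples k s ↔ (∀ j, f j ≤ -1) ∧ ∑ j, f j = s := by
  simp only [negTuples, mem_filter, Fintype.mem_piFinset, mem_Icc]
  refine ⟨fun ⟨hf, hsum⟩ => ⟨fun j => (hf j).2, hsum⟩,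
    fun ⟨hf, hsum⟩ => ⟨fun j => ⟨?_, hf j⟩, hsum⟩⟩
  have : -f j ≤ ∑ i, -f i :=
    single_le_sum (f := fun i => -f i) (fun i _ => by linarith [hf i]) (mem_univ j)
  rw [sum_neg_distrib, hsum] at this
  linarith

lemma negTuples_eq_empty (hs : -(k : ℤ) < s) : negTuples k s = ∅ := by
  refine eq_empty_of_forall_notMem fun f hf => ?_
  obtain ⟨hf, hsum⟩ := mem_negTuples_iff.mp hf
  have : ∑ j, f j ≤ ∑ _j : Fin k, (-1 : ℤ) := sum_le_sum fun j _ => hf j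
  simp only [sum_const, card_univ, Fintype.card_fin, nsmul_eq_mul, mul_neg_one] at this
  omega

lemma insertNth_mem_negTuples (j : Fin (k + 1)) (hm : 1 ≤ m) {g : Fin k → ℤ}
    (hg : g ∈ negTuples k (s + m)) : Fin.insertNth j (-m) g ∈ negTuples (k + 1) s := by
  obtain ⟨hg, hsum⟩ := mem_negTuples_iff.mp hg
  refine mem_negTuples_iff.mpr ⟨fun i => ?_, ?_⟩
  · rcases eq_or_ne i j with rfl | hij
    · rw [Fin.insertNth_apply_same]
      omega
    · obtain ⟨i, rfl⟩ := Fin.exists_succAbove_eq hij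
      rw [Fin.insertNth_apply_succAbove]
      exact hg i
  · rw [Fin.sum_insertNth, hsum]
    ring

lemma removeNth_mem_negTuples (j : Fin (k + 1)) {f : Fin (k + 1) → ℤ}
    (hf : f ∈ negTuples (k + 1) s) (hfj : f j = -m) :
    Fin.removeNth j f ∈ negTuples k (s + m) := by
  obtain ⟨hf, hsum⟩ := mem_negTuples_iff.mp hf
  refine mem_negTuples_iff.mpr ⟨fun i => hf _, ?_⟩
  rw [Fin.sum_univ_succAbove f j, hfj] at hsum
  simp only [Fin.removeNth]
  omega

lemma sum_negTuples_filter_apply_eq {E : Type*} [AddCommMonoid E] (j : Fin (k + 1))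
    (hm : 1 ≤ m) (F : (Fin k → ℤ) → E) :
    ∑ f ∈ negTuples (k + 1) s with f j = -m, F (Fin.removeNth j f)
      = ∑ g ∈ negTuples k (s + m), F g :=
  sum_nbij' (Fin.removeNth j) (Fin.insertNth (α := fun _ => ℤ) j (-m))
    (fun f hf => removeNth_mem_negTuples j (mem_filter.mp hf).1 (mem_filter.mp hf).2)
    (fun g hg => mem_filter.mpr
      ⟨insertNth_mem_negTuples j hm hg, Fin.insertNth_apply_same (α := fun _ => ℤ) j (-m) g⟩)
    (fun f hf => by
      rw [← (mem_filter.mp hf).2]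
      exact Fin.insertNth_self_removeNth (α := fun _ => ℤ) j f)
    (fun g _ => Fin.removeNth_insertNth (α := fun _ => ℤ) j (-m) g)
    (fun _ _ => rfl)

end NegTuples

section Commutator

variable {R A : Type*} [CommSemiring R] [Ring A] [Algebra R A]

lemma mul_sum_smul_sub_sum_smul_mul {ι : Type*} (a : A) (t : Finset ι) (c : ι → R)
    (b : ι → A) :
    a * ∑ i ∈ t, c i • b i - (∑ i ∈ t, c i • b i) * a
      = ∑ i ∈ t, c i • (a * b i - b i * a) := by
  simp only [mul_sum, sum_mul, mul_smul_comm, smul_mul_assoc, smul_sub, sum_sub_distrib]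

lemma commutator_prod_ofFn (a : A) {k : ℕ} (b : Fin (k + 1) → A) (c : Fin (k + 1) → R)
    (hc : ∀ j, a * b j - b j * a = c j • 1) :
    a * (List.ofFn b).prod - (List.ofFn b).prod * a
      = ∑ j, c j • (List.ofFn fun i => b (j.succAbove i)).prod := by
  induction k with
  | zero => simpa using hc 0
  | succ k ih =>
    have htail := ih (fun i => b i.succ) (fun i => c i.succ) fun j => hc j.succ
    have hprod : (List.ofFn b).prod = b 0 * (List.ofFn fun i => b i.succ).prod := by
      rw [List.ofFn_succ, List.prod_cons]
    have hsplit : a * (List.ofFn b).prod - (List.ofFn b).prod * a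
        = (a * b 0 - b 0 * a) * (List.ofFn fun i => b i.succ).prod
          + b 0 * (a * (List.ofFn fun i => b i.succ).prod
              - (List.ofFn fun i => b i.succ).prod * a) := by
      rw [hprod]
      noncomm_ring
    rw [hsplit, hc 0, htail, mul_sum, smul_mul_assoc, one_mul, Fin.sum_univ_succ (n := k + 1)]
    congr 1
    refine sum_congr rfl fun j _ => ?_
    rw [List.ofFn_succ, List.prod_cons, Fin.succ_succAbove_zero, mul_smul_comm]
    simp only [Fin.succ_succAbove_succ]

end Commutator

section Heisenberg

variable (act : H → ℤ → Module.End ℂ M) (h : H)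

section PowCoef

omit [AddCommGroup H] [Module ℂ H]

/-- The coefficient of `z^{-s}` in `(Σ_{n<0} h_{(n)} z^{-n} / (-n))^k`. -/
noncomputable def powCoef (k : ℕ) (s : ℤ) : Module.End ℂ M :=
  ∑ f ∈ negTuples k s, (∏ j, (-(f j : ℂ))⁻¹) • (List.ofFn fun j => act h (f j)).prod

lemma powCoef_eq_zero {k : ℕ} {s : ℤ} (hs : -(k : ℤ) < s) : powCoef act h k s = 0 := by
  rw [powCoef, negTuples_eq_empty hs, sum_empty]

lemma powCoef_zero (s : ℤ) : powCoef act h 0 s = if s = 0 then 1 else 0 := by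
  by_cases hs : s = 0
  · simp [powCoef, negTuples, hs]
  · simp [powCoef, negTuples, hs, Ne.symm hs]

lemma Ecoef_eq_sum_range {r : ℤ} {N : ℕ} (hN : -r < N) :
    Ecoef act h r = ∑ k ∈ range N, (k.factorial : ℂ)⁻¹ • powCoef act h k r := by
  rw [Ecoef]
  split_ifs with hr
  · exact (sum_eq_zero fun k _ => by rw [powCoef_eq_zero act h (by omega), smul_zero]).symm
  · change ∑ k ∈ range ((-r).toNat + 1), (k.factorial : ℂ)⁻¹ • powCoef act h k r = _
    refine sum_subset (range_subset_range.mpr (by omega)) fun k _ hk => ?_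
    rw [mem_range, not_lt] at hk
    rw [powCoef_eq_zero act h (by omega), smul_zero]

end PowCoef

variable {κ : H →ₗ[ℂ] H →ₗ[ℂ] ℂ}
  (heis : ∀ x y : H, ∀ m n : ℤ,
    act x m * act y n - act y n * act x m
      = if m + n = 0 then ((m : ℂ) * κ x y) • (1 : Module.End ℂ M) else 0)
include heis

lemma commute_act_powCoef (x : H) {m : ℤ} (hm : m ≤ 0) (k : ℕ) (s : ℤ) :
    Commute (act x m) (powCoef act h k s) := by
  refine Commute.sum_right _ _ _ fun f hf =>
    (Commute.list_prod_right _ _ fun b hb => ?_).smul_right _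
  obtain ⟨j, rfl⟩ := List.mem_ofFn.mp hb
  have hfj := (mem_negTuples_iff.mp hf).1 j
  have := heis x h m (f j)
  rw [if_neg (by omega)] at this
  exact sub_eq_zero.mp this

lemma commutator_act_prod_ofFn (x : H) (m : ℤ) {k : ℕ} (f : Fin (k + 1) → ℤ) :
    act x m * (List.ofFn fun j => act h (f j)).prod
        - (List.ofFn fun j => act h (f j)).prod * act x m
      = ∑ j, if f j = -m then
          ((m : ℂ) * κ x h) • (List.ofFn fun i => act h (f (j.succAbove i))).prod
        else 0 := by
  rw [commutator_prod_ofFn (act x m) (fun j => act h (f j))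
    (fun j => if f j = -m then (m : ℂ) * κ x h else 0) fun j => ?_]
  · exact sum_congr rfl fun j _ => by split_ifs <;> simp
  · rw [heis]
    by_cases hj : f j = -m <;> simp [hj, show (m + f j = 0 ↔ f j = -m) by omega]

lemma commutator_act_powCoef_succ (x : H) {m : ℤ} (hm : 1 ≤ m) (k : ℕ) (s : ℤ) :
    act x m * powCoef act h (k + 1) s - powCoef act h (k + 1) s * act x m
      = (((k : ℂ) + 1) * κ x h) • powCoef act h k (s + m) := by
  have hm0 : (m : ℂ) ≠ 0 := by exact_mod_cast (show m ≠ 0 by omega)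
  have hweight : ∀ (f : Fin (k + 1) → ℤ) (j : Fin (k + 1)), f j = -m →
      (∏ i, (-(f i : ℂ))⁻¹) * m = ∏ i, (-(Fin.removeNth j f i : ℂ))⁻¹ := by
    intro f j hj
    rw [Fin.prod_univ_succAbove _ j, hj, Int.cast_neg, neg_neg, mul_comm, ← mul_assoc,
      mul_inv_cancel₀ hm0, one_mul]
    rfl
  have hmonomial : ∀ f ∈ negTuples (k + 1) s,
      (∏ j, (-(f j : ℂ))⁻¹) • (act x m * (List.ofFn fun j => act h (f j)).prod
        - (List.ofFn fun j => act h (f j)).prod * act x m)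
      = ∑ j, if f j = -m then κ x h • (∏ i, (-(Fin.removeNth j f i : ℂ))⁻¹) •
          (List.ofFn fun i => act h (Fin.removeNth j f i)).prod else 0 := by
    intro f _
    rw [commutator_act_prod_ofFn act h heis, smul_sum]
    refine sum_congr rfl fun j _ => ?_
    split_ifs with hj
    · rw [smul_smul, smul_smul, ← mul_assoc, hweight f j hj, mul_comm]
      rfl
    · exact smul_zero _
  rw [powCoef, mul_sum_smul_sub_sum_smul_mul, sum_congr rfl hmonomial, sum_comm]
  simp only [← sum_filter]
  rw [sum_congr rfl fun j _ => sum_negTuples_filter_apply_eq j hm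
    (fun g => κ x h • (∏ i, (-(g i : ℂ))⁻¹) • (List.ofFn fun i => act h (g i)).prod),
    sum_const, card_univ, Fintype.card_fin, ← smul_sum, mul_smul, ← Nat.cast_smul_eq_nsmul ℂ]
  push_cast
  rfl

end Heisenberg

theorem stmt_7_general (κ : H →ₗ[ℂ] H →ₗ[ℂ] ℂ)
    (act : H → ℤ → Module.End ℂ M)
    (heis : ∀ x y : H, ∀ m n : ℤ,
      act x m * act y n - act y n * act x m
        = if m + n = 0 then ((m : ℂ) * κ x y) • (1 : Module.End ℂ M) else 0)
    (x h : H) (m r : ℤ) (hr : r ≤ 0) :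
    (m ≤ 0 → act x m * Ecoef act h r = Ecoef act h r * act x m) ∧
    (1 ≤ m → act x m * Ecoef act h r - Ecoef act h r * act x m
      = κ x h • Ecoef act h (r + m)) := by
  obtain ⟨N, rfl⟩ : ∃ N : ℕ, r = -N := ⟨(-r).toNat, by omega⟩
  refine ⟨fun hm => ?_, fun hm => ?_⟩
  · rw [Ecoef_eq_sum_range act h (N := N + 1) (by omega)]
    exact (Commute.sum_right _ _ _ fun k _ =>
      (commute_act_powCoef act h heis x hm k _).smul_right _).eq
  · rw [Ecoef_eq_sum_range act h (N := N + 1) (by omega),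
      Ecoef_eq_sum_range act h (N := N) (by omega), mul_sum_smul_sub_sum_smul_mul,
      sum_range_succ', powCoef_zero, smul_sum]
    simp only [commutator_act_powCoef_succ act h heis x hm, smul_smul]
    rw [add_eq_left.mpr (by split_ifs <;> simp)]
    refine sum_congr rfl fun k _ => ?_
    rw [Nat.factorial_succ]
    push_cast
    field_simp

theorem stmt_7 (κ : H →ₗ[ℂ] H →ₗ[ℂ] ℂ) (hκ : ∀ x y : H, κ x y = κ y x)
    (act : H → ℤ → Module.End ℂ M)
    (heis : ∀ x y : H, ∀ m n : ℤ,
      act x m * act y n - act y n * act x m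
        = if m + n = 0 then ((m : ℂ) * κ x y) • (1 : Module.End ℂ M) else 0)
    (x h : H) (m r : ℤ) (hr : r ≤ 0) :
    (m ≤ 0 → act x m * Ecoef act h r = Ecoef act h r * act x m) ∧
    (1 ≤ m → act x m * Ecoef act h r - Ecoef act h r * act x m
      = κ x h • Ecoef act h (r + m)) :=
  stmt_7_general κ act heis x h m r hr
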